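/- arXiv:1504.00795 — 5 statements merged into one kernel-verified Lean document; each statement's English description precedes it below -/
import Mathlib

section
/- For all real x, y, u, v, setting V = y² + v², Z = x² + u², ω = V + Z, and Δ = xv - yu, the polynomial P₀ = (5VZ + ω²)(2VZ + ω²) - 12Δ²(ω² - VZ) satisfies P₀ ≥ (63/88)·(x² + y² + u² + v²)⁴. -/
/-!
With `p = V Z`, Cauchy–Schwarz gives `Δ² ≤ p`, and `4 p ≤ ω²` gives `p ≤ ω²`, so the
negative term is at least `-12 p (ω² - p)`. What remains is the quadratic in `p`
`22 p² - 5 p ω² + ω⁴ = 22 (p - 5 ω² / 44)² + 63/88 ω⁴`.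
-/

section

variable {K : Type*} [Field K] [LinearOrder K] [IsStrictOrderedRing K]

theorem sq_mul_sub_mul_le_mul (x y u v : K) :
    (x * v - y * u) ^ 2 ≤ (x ^ 2 + u ^ 2) * (y ^ 2 + v ^ 2) :=
  calc (x * v - y * u) ^ 2 ≤ (x * v - y * u) ^ 2 + (x * y + u * v) ^ 2 :=
        le_add_of_nonneg_right (sq_nonneg _)
    _ = (x ^ 2 + u ^ 2) * (y ^ 2 + v ^ 2) := by ring

theorem sixtyThree_div_eightyEight_mul_pow_four_le {p d ω : K} (hd : d ≤ p) (hp : p ≤ ω ^ 2) :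
    63 / 88 * ω ^ 4 ≤ (5 * p + ω ^ 2) * (2 * p + ω ^ 2) - 12 * d * (ω ^ 2 - p) :=
  calc 63 / 88 * ω ^ 4 ≤ 63 / 88 * ω ^ 4 + 22 * (p - 5 / 44 * ω ^ 2) ^ 2 :=
        le_add_of_nonneg_right (by positivity)
    _ = (5 * p + ω ^ 2) * (2 * p + ω ^ 2) - 12 * p * (ω ^ 2 - p) := by ring
    _ ≤ (5 * p + ω ^ 2) * (2 * p + ω ^ 2) - 12 * d * (ω ^ 2 - p) := by
        gcongr

end

theorem stmt_3 (x y u v V Z ω Δ P₀ : ℝ)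
    (hV : V = y ^ 2 + v ^ 2) (hZ : Z = x ^ 2 + u ^ 2)
    (hω : ω = V + Z) (hΔ : Δ = x * v - y * u)
    (hP : P₀ = (5 * V * Z + ω ^ 2) * (2 * V * Z + ω ^ 2) - 12 * Δ ^ 2 * (ω ^ 2 - V * Z)) :
    P₀ ≥ 63 / 88 * (x ^ 2 + y ^ 2 + u ^ 2 + v ^ 2) ^ 4 := by
  have hCS : Δ ^ 2 ≤ V * Z := by
    rw [hΔ, hV, hZ, mul_comm (y ^ 2 + v ^ 2)]
    exact sq_mul_sub_mul_le_mul x y u v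
  have hVZ : V * Z ≤ ω ^ 2 := by
    have hV₀ : 0 ≤ V := hV ▸ by positivity
    have hZ₀ : 0 ≤ Z := hZ ▸ by positivity
    linarith [hω ▸ four_mul_le_sq_add V Z, mul_nonneg hV₀ hZ₀]
  have hsum : x ^ 2 + y ^ 2 + u ^ 2 + v ^ 2 = ω := by rw [hω, hV, hZ]; ring
  rw [hsum, hP, ge_iff_le]
  linarith [sixtyThree_div_eightyEight_mul_pow_four_le hCS hVZ]
end

section
/- Let ρ₀(x, y, u, v) = (x² + u²)²(y² + v²) + (x² + u²)(y² + v²)². Then the gradient ∇ρ₀ vanishes exactly on the set {y = v = 0} ∪ {x = u = 0}. -/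
/-!
With `A = x² + u²` and `B = y² + v²` we have `ρ₀ = A²B + AB²`, so by the chain rule
`dρ₀ = B(2A + B) dA + A(2B + A) dB` with `dA = 2(x dx + u du)`, `dB = 2(y dy + v dv)`.
Since `A, B ≥ 0`, the coefficient `B(2A + B)` vanishes iff `y = v = 0` and `A(2B + A)` vanishes
iff `x = u = 0`.
-/

open ContinuousLinearMap

section Calculus

variable {E : Type*} [NormedAddCommGroup E] [NormedSpace ℝ E]
  {f g : E → ℝ} {f' g' : E →L[ℝ] ℝ} {p : E}

theorem HasFDerivAt.sq_add_sq (hf : HasFDerivAt f f' p) (hg : HasFDerivAt g g' p) :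
    HasFDerivAt (fun q => f q ^ 2 + g q ^ 2) ((2 * f p) • f' + (2 * g p) • g') p := by
  refine ((hf.pow 2).add (hg.pow 2)).congr_fderiv ?_
  ext h
  simp

theorem HasFDerivAt.sq_mul_add_mul_sq (hf : HasFDerivAt f f' p) (hg : HasFDerivAt g g' p) :
    HasFDerivAt (fun q => f q ^ 2 * g q + f q * g q ^ 2)
      ((g p * (2 * f p + g p)) • f' + (f p * (2 * g p + f p)) • g') p := by
  refine (((hf.pow 2).mul hg).add (hf.mul (hg.pow 2))).congr_fderiv ?_
  ext h
  simp only [Nat.add_one_sub_one, pow_one, nsmul_eq_mul, Nat.cast_ofNat, add_apply, smul_apply,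
    smul_eq_mul]
  ring

end Calculus

theorem sq_add_sq_eq_zero_iff {a b : ℝ} : a ^ 2 + b ^ 2 = 0 ↔ a = 0 ∧ b = 0 := by
  simpa only [sq] using mul_self_add_mul_self_eq_zero

theorem mul_two_mul_add_self_eq_zero_iff {s t : ℝ} (hs : 0 ≤ s) (ht : 0 ≤ t) :
    s * (2 * t + s) = 0 ↔ s = 0 := by
  constructor
  · intro h
    nlinarith
  · rintro rfl
    simp

theorem mul_eq_zero_and_mul_eq_zero_iff {R : Type*} [MulZeroClass R] [NoZeroDivisors R]
    {c a b : R} : c * a = 0 ∧ c * b = 0 ↔ c = 0 ∨ a = 0 ∧ b = 0 := by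
  simp only [mul_eq_zero]
  tauto

/-- `ρ₀` in the coordinates `z₁ = x + iy`, `z₂ = u + iv` of `ℂ²`, in which `ℝ² = {y = v = 0}` and
`iℝ² = {x = u = 0}`. -/
def totallyRealQuartic (p : ℝ × ℝ × ℝ × ℝ) : ℝ :=
  (p.1 ^ 2 + p.2.2.1 ^ 2) ^ 2 * (p.2.1 ^ 2 + p.2.2.2 ^ 2) +
    (p.1 ^ 2 + p.2.2.1 ^ 2) * (p.2.1 ^ 2 + p.2.2.2 ^ 2) ^ 2

theorem fderiv_totallyRealQuartic_apply (x y u v a b c d : ℝ) :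
    fderiv ℝ totallyRealQuartic (x, y, u, v) (a, b, c, d) =
      (y ^ 2 + v ^ 2) * (2 * (x ^ 2 + u ^ 2) + (y ^ 2 + v ^ 2)) * (2 * (x * a + u * c)) +
      (x ^ 2 + u ^ 2) * (2 * (y ^ 2 + v ^ 2) + (x ^ 2 + u ^ 2)) * (2 * (y * b + v * d)) := by
  have hx := hasFDerivAt_fst (𝕜 := ℝ) (p := (x, y, u, v))
  have hy := (hasFDerivAt_snd (𝕜 := ℝ) (p := (x, y, u, v))).fst
  have hu := (hasFDerivAt_snd (𝕜 := ℝ) (p := (x, y, u, v))).snd.fst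
  have hv := (hasFDerivAt_snd (𝕜 := ℝ) (p := (x, y, u, v))).snd.snd
  have hρ : HasFDerivAt totallyRealQuartic _ (x, y, u, v) :=
    (hx.sq_add_sq hu).sq_mul_add_mul_sq (hy.sq_add_sq hv)
  rw [hρ.fderiv]
  simp only [smul_add, add_apply, smul_apply, coe_fst', smul_eq_mul, comp_apply, coe_snd']
  ring

theorem fderiv_totallyRealQuartic_eq_zero_iff (x y u v : ℝ) :
    fderiv ℝ totallyRealQuartic (x, y, u, v) = 0 ↔ (y = 0 ∧ v = 0) ∨ (x = 0 ∧ u = 0) := by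
  set α := (y ^ 2 + v ^ 2) * (2 * (x ^ 2 + u ^ 2) + (y ^ 2 + v ^ 2))
  set β := (x ^ 2 + u ^ 2) * (2 * (y ^ 2 + v ^ 2) + (x ^ 2 + u ^ 2))
  have hcoeff : fderiv ℝ totallyRealQuartic (x, y, u, v) = 0 ↔
      (α * x = 0 ∧ α * u = 0) ∧ (β * y = 0 ∧ β * v = 0) := by
    simp only [ContinuousLinearMap.ext_iff, Prod.forall, fderiv_totallyRealQuartic_apply,
      zero_apply]
    constructor
    · intro h
      refine ⟨⟨?_, ?_⟩, ?_, ?_⟩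
      · linear_combination h 1 0 0 0 / 2
      · linear_combination h 0 0 1 0 / 2
      · linear_combination h 0 1 0 0 / 2
      · linear_combination h 0 0 0 1 / 2
    · rintro ⟨⟨hx, hu⟩, hy, hv⟩ a b c d
      linear_combination (2 * a) * hx + (2 * c) * hu + (2 * b) * hy + (2 * d) * hv
  have hα : α = 0 ↔ y = 0 ∧ v = 0 := by
    rw [mul_two_mul_add_self_eq_zero_iff (by positivity) (by positivity), sq_add_sq_eq_zero_iff]
  have hβ : β = 0 ↔ x = 0 ∧ u = 0 := by
    rw [mul_two_mul_add_self_eq_zero_iff (by positivity) (by positivity), sq_add_sq_eq_zero_iff]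
  rw [hcoeff, mul_eq_zero_and_mul_eq_zero_iff, mul_eq_zero_and_mul_eq_zero_iff, hα, hβ]
  tauto

theorem stmt_10 (ρ₀ : ℝ × ℝ × ℝ × ℝ → ℝ)
    (hρ₀ : ρ₀ = fun p =>
      (p.1 ^ 2 + p.2.2.1 ^ 2) ^ 2 * (p.2.1 ^ 2 + p.2.2.2 ^ 2) +
      (p.1 ^ 2 + p.2.2.1 ^ 2) * (p.2.1 ^ 2 + p.2.2.2 ^ 2) ^ 2) :
    ∀ x y u v : ℝ, fderiv ℝ ρ₀ (x, y, u, v) = 0 ↔ (y = 0 ∧ v = 0) ∨ (x = 0 ∧ u = 0) := by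
  subst hρ₀
  exact fderiv_totallyRealQuartic_eq_zero_iff
end

section
/- Let M and N be real-linear subspaces of ℂⁿ of real dimension n with M ∩ N = {0}, both totally real (containing no nonzero complex subspace). Then there exists an invertible ℂ-linear map T : ℂⁿ → ℂⁿ with T(N) = ℝⁿ and T(M) = (A + iI)ℝⁿ for some real n×n matrix A such that i is not an eigenvalue of A (equivalently, A + iI is invertible over ℂ). -/
open Matrix

/-- Multiplication by `i` on `ℂⁿ`, as a real-linear map. -/
noncomputable def Jmap (n : ℕ) : (Fin n → ℂ) →ₗ[ℝ] (Fin n → ℂ) :=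
  LinearMap.restrictScalars ℝ (Complex.I • (LinearMap.id : (Fin n → ℂ) →ₗ[ℂ] (Fin n → ℂ)))

/-- The inclusion `ℝⁿ → ℂⁿ` as a real-linear map. -/
noncomputable def iota (n : ℕ) : (Fin n → ℝ) →ₗ[ℝ] (Fin n → ℂ) where
  toFun x := fun i => (x i : ℂ)
  map_add' x y := by ext i; simp
  map_smul' c x := by ext i; simp

/-- The standard real subspace `ℝⁿ ⊂ ℂⁿ`. -/
noncomputable def stdReal (n : ℕ) : Submodule ℝ (Fin n → ℂ) := LinearMap.range (iota n)

/-- The real subspace `(A + iI)ℝⁿ ⊂ ℂⁿ` associated to a real matrix `A`. -/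
noncomputable def MA {n : ℕ} (A : Matrix (Fin n) (Fin n) ℝ) : Submodule ℝ (Fin n → ℂ) :=
  LinearMap.range ((LinearMap.restrictScalars ℝ
    (Matrix.mulVecLin (A.map (Complex.ofReal) + Complex.I • (1 : Matrix (Fin n) (Fin n) ℂ)))).comp
      (iota n))

/-!
A real basis of a totally real subspace is ℂ-linearly independent. So a real basis of `N` is a
complex basis of `ℂⁿ`, and the ℂ-linear `T` sending it to the standard basis carries `N` onto `ℝⁿ`
and `M` onto a totally real `T(M)` of dimension `n` meeting `ℝⁿ` trivially. The imaginary-part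
projection is then an isomorphism `T(M) ≅ ℝⁿ`, so `T(M)` is a graph `{Ay + iy}`, i.e.
`T(M) = (A + iI)ℝⁿ`. The columns of `A + iI` are a real basis of this totally real subspace, hence
ℂ-linearly independent, so `A + iI` is invertible.
-/

open Complex

namespace Submodule

variable {V W : Type*} [AddCommGroup V] [Module ℂ V] [Module ℝ V] [IsScalarTower ℝ ℂ V]
  [AddCommGroup W] [Module ℂ W] [Module ℝ W] [IsScalarTower ℝ ℂ W]

def IsTotallyReal (N : Submodule ℝ V) : Prop := ∀ x ∈ N, I • x ∈ N → x = 0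

theorem IsTotallyReal.linearIndependent_complex {N : Submodule ℝ V} (hN : N.IsTotallyReal)
    {ι : Type*} [Fintype ι] {v : ι → V} (hv : LinearIndependent ℝ v) (hvN : ∀ i, v i ∈ N) :
    LinearIndependent ℂ v := by
  rw [Fintype.linearIndependent_iff] at hv ⊢
  intro g hg
  set a := ∑ i, (g i).re • v i
  set c := ∑ i, (g i).im • v i
  have hac : a + I • c = 0 := by
    rw [← hg, Finset.smul_sum, ← Finset.sum_add_distrib]
    refine Finset.sum_congr rfl fun i _ => ?_
    rw [← algebraMap_smul ℂ (g i).re, ← algebraMap_smul ℂ (g i).im, smul_smul, ← add_smul]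
    congr 1
    simp [Complex.ext_iff]
  have haN : a ∈ N := sum_mem fun i _ => smul_mem _ _ (hvN i)
  have hcN : c ∈ N := sum_mem fun i _ => smul_mem _ _ (hvN i)
  have hc : c = 0 := hN c hcN (by rw [eq_neg_of_add_eq_zero_right hac]; exact neg_mem haN)
  have ha : a = 0 := by simpa [hc] using hac
  exact fun i => Complex.ext (hv _ ha i) (hv _ hc i)

theorem IsTotallyReal.map {N : Submodule ℝ V} (hN : N.IsTotallyReal) {f : V →ₗ[ℂ] W}
    (hf : Function.Injective f) : (N.map (f.restrictScalars ℝ)).IsTotallyReal := by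
  rintro _ ⟨x, hx, rfl⟩ ⟨y, hy, hxy⟩
  have hyx : y = I • x := hf (by simpa using hxy)
  rw [hN x hx (hyx ▸ hy), map_zero]

end Submodule

theorem isTotallyReal_of_inf_map_Jmap_eq_bot {n : ℕ} {N : Submodule ℝ (Fin n → ℂ)}
    (h : N ⊓ N.map (Jmap n) = ⊥) : N.IsTotallyReal := by
  intro x hx hIx
  have hmem : I • x ∈ N ⊓ N.map (Jmap n) := ⟨hIx, x, hx, rfl⟩
  rw [h, Submodule.mem_bot] at hmem
  exact (smul_eq_zero.mp hmem).resolve_left I_ne_zero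

theorem iota_re_add_I_smul_iota_im {n : ℕ} (z : Fin n → ℂ) :
    iota n (reLm.compLeft (Fin n) z) + I • iota n (imLm.compLeft (Fin n) z) = z := by
  funext i
  simp [iota, Complex.ext_iff]

theorem imLm_compLeft_iota_add_I_smul_iota {n : ℕ} (x y : Fin n → ℝ) :
    imLm.compLeft (Fin n) (iota n x + I • iota n y) = y := by
  funext i
  simp [iota]

theorem map_ofReal_add_I_smul_one_mulVec_iota {n : ℕ} (A : Matrix (Fin n) (Fin n) ℝ)
    (y : Fin n → ℝ) :
    (A.map ofReal + I • (1 : Matrix (Fin n) (Fin n) ℂ)) *ᵥ iota n y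
      = iota n (A *ᵥ y) + I • iota n y := by
  rw [add_mulVec, smul_mulVec, one_mulVec]
  congr 1
  funext i
  simp [mulVec, dotProduct, iota]

theorem iota_single {n : ℕ} (j : Fin n) : iota n (Pi.single j 1) = Pi.single j 1 := by
  funext i
  by_cases h : i = j <;> simp [iota, h]

theorem exists_linearEquiv_map_eq_stdReal {n : ℕ} {N : Submodule ℝ (Fin n → ℂ)}
    (hN : N.IsTotallyReal) (hdim : Module.finrank ℝ N = n) :
    ∃ T : (Fin n → ℂ) ≃ₗ[ℂ] (Fin n → ℂ), N.map (T.toLinearMap.restrictScalars ℝ) = stdReal n := by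
  let b := Module.finBasisOfFinrankEq ℝ N hdim
  have hli : LinearIndependent ℂ (N.subtype ∘ b) :=
    hN.linearIndependent_complex (b.linearIndependent.map' _ N.ker_subtype) fun j => (b j).2
  let bC := Module.Basis.mk hli (hli.span_eq_top_of_card_eq_finrank' (by simp)).ge
  let T := bC.equiv (Pi.basisFun ℂ (Fin n)) (Equiv.refl _)
  have hT : T.toLinearMap.restrictScalars ℝ ∘ₗ N.subtype = iota n ∘ₗ b.equivFun.toLinearMap :=
    b.ext fun j => by
      have hbC : bC j = b j := Module.Basis.mk_apply _ _ _
      have hbj : b.equivFun (b j) = Pi.single j 1 := by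
        funext i
        simp [Pi.single_apply, eq_comm]
      change T (b j) = iota n (b.equivFun (b j))
      rw [← hbC, Module.Basis.equiv_apply, Equiv.refl_apply, Pi.basisFun_apply, hbj, iota_single]
  refine ⟨T, ?_⟩
  rw [← N.range_subtype, ← LinearMap.range_comp, hT,
    LinearMap.range_comp_of_range_eq_top _ b.equivFun.range, stdReal]

theorem exists_eq_MA_of_inf_stdReal_eq_bot {n : ℕ} {M : Submodule ℝ (Fin n → ℂ)}
    (hdim : Module.finrank ℝ M = n) (hM : M ⊓ stdReal n = ⊥) :
    ∃ A : Matrix (Fin n) (Fin n) ℝ, M = MA A := by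
  have him : Function.Injective (imLm.compLeft (Fin n) ∘ₗ M.subtype) := by
    rw [← LinearMap.ker_eq_bot, LinearMap.ker_eq_bot']
    intro m hm
    have hmem : (m : Fin n → ℂ) ∈ M ⊓ stdReal n := by
      refine ⟨m.2, reLm.compLeft (Fin n) m, ?_⟩
      conv_rhs => rw [← iota_re_add_I_smul_iota_im (m : Fin n → ℂ)]
      simp only [LinearMap.comp_apply, Submodule.subtype_apply] at hm
      rw [hm, map_zero, smul_zero, add_zero]
    rw [hM, Submodule.mem_bot] at hmem
    exact Subtype.ext hmem
  let e := (imLm.compLeft (Fin n) ∘ₗ M.subtype).linearEquivOfInjective him (by simp [hdim])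
  let ψ := e.symm
  let reψ : (Fin n → ℝ) →ₗ[ℝ] (Fin n → ℝ) := reLm.compLeft (Fin n) ∘ₗ M.subtype ∘ₗ ψ.toLinearMap
  let A := LinearMap.toMatrix' reψ
  have hψ : (A.map ofReal + I • (1 : Matrix (Fin n) (Fin n) ℂ)).mulVecLin.restrictScalars ℝ ∘ₗ
      iota n = M.subtype ∘ₗ ψ.toLinearMap := by
    refine LinearMap.ext fun y => ?_
    have hre : reLm.compLeft (Fin n) (ψ y) = A *ᵥ y := (reψ.toMatrix'_mulVec y).symm
    have him : imLm.compLeft (Fin n) (ψ y) = y := e.apply_symm_apply y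
    have hψy := iota_re_add_I_smul_iota_im (ψ y : Fin n → ℂ)
    rw [hre, him] at hψy
    simpa only [LinearMap.comp_apply, LinearMap.restrictScalars_apply, mulVecLin_apply,
      map_ofReal_add_I_smul_one_mulVec_iota, LinearEquiv.coe_coe, Submodule.subtype_apply]
      using hψy
  refine ⟨A, ?_⟩
  rw [MA, hψ, LinearMap.range_comp_of_range_eq_top _ ψ.range, Submodule.range_subtype]

theorem isUnit_of_isTotallyReal_MA {n : ℕ} {A : Matrix (Fin n) (Fin n) ℝ}
    (h : (MA A).IsTotallyReal) :
    IsUnit (A.map ofReal + I • (1 : Matrix (Fin n) (Fin n) ℂ)) := by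
  let f := (A.map ofReal + I • (1 : Matrix (Fin n) (Fin n) ℂ)).mulVecLin.restrictScalars ℝ ∘ₗ
    iota n
  have hf : Function.Injective f := fun x y hxy => by
    have := congrArg (imLm.compLeft (Fin n)) hxy
    simpa only [f, LinearMap.comp_apply, LinearMap.restrictScalars_apply, mulVecLin_apply,
      map_ofReal_add_I_smul_one_mulVec_iota, imLm_compLeft_iota_add_I_smul_iota] using this
  have hcol : (A.map ofReal + I • (1 : Matrix (Fin n) (Fin n) ℂ)).col =
      f ∘ Pi.basisFun ℝ (Fin n) := by
    funext j
    simp only [f, Function.comp_apply, Pi.basisFun_apply, LinearMap.comp_apply, iota_single,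
      LinearMap.restrictScalars_apply, mulVecLin_apply, mulVec_single_one]
  rw [← linearIndependent_cols_iff_isUnit, hcol]
  exact h.linearIndependent_complex
    ((Pi.basisFun ℝ (Fin n)).linearIndependent.map' f (LinearMap.ker_eq_bot.mpr hf))
    fun j => ⟨_, rfl⟩

theorem stmt_11 (n : ℕ) (M N : Submodule ℝ (Fin n → ℂ))
    (hMdim : Module.finrank ℝ M = n) (hNdim : Module.finrank ℝ N = n)
    (hMN : M ⊓ N = ⊥)
    (hMtr : M ⊓ M.map (Jmap n) = ⊥) (hNtr : N ⊓ N.map (Jmap n) = ⊥) :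
    ∃ (T : (Fin n → ℂ) ≃ₗ[ℂ] (Fin n → ℂ)) (A : Matrix (Fin n) (Fin n) ℝ),
      IsUnit (A.map (Complex.ofReal) + Complex.I • (1 : Matrix (Fin n) (Fin n) ℂ)) ∧
      N.map (LinearMap.restrictScalars ℝ T.toLinearMap) = stdReal n ∧
      M.map (LinearMap.restrictScalars ℝ T.toLinearMap) = MA A := by
  obtain ⟨T, hTN⟩ := exists_linearEquiv_map_eq_stdReal (isTotallyReal_of_inf_map_Jmap_eq_bot hNtr)
    hNdim
  set Tr := T.toLinearMap.restrictScalars ℝ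
  have hTM_real : (M.map Tr).IsTotallyReal :=
    (isTotallyReal_of_inf_map_Jmap_eq_bot hMtr).map T.injective
  have hTM_std : M.map Tr ⊓ stdReal n = ⊥ := by
    rw [← hTN, ← Submodule.map_inf Tr T.injective, hMN, Submodule.map_bot]
  have hTM_dim : Module.finrank ℝ (M.map Tr) = n :=
    (LinearEquiv.finrank_map_eq (T.restrictScalars ℝ) M).trans hMdim
  obtain ⟨A, hA⟩ := exists_eq_MA_of_inf_stdReal_eq_bot hTM_dim hTM_std
  exact ⟨T, A, isUnit_of_isTotallyReal_MA (hA ▸ hTM_real), hTN, hA⟩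
end

section
/- Let a ∈ ℝ, d ∈ ℝ, and let M ⊂ ℝ⁴ be the real span of (a, 1, 0, 0) and (d, 0, a, 1). Then the squared Euclidean distance from (x, y, u, v) to M equals (u - av)²/(1 + a²) + ((1 + a²)(x - ay) - dau - dv)²/((1 + a²)((1 + a²)² + d²)). -/
/-!
The orthogonal complement of `M` has the orthogonal basis `(0, 0, 1, -a)`,
`(1 + a², -a(1 + a²), -ad, -d)`, so the squared distance to `M` is the sum of the squared
components of the point along these two vectors, `⟪w, p⟫² / ‖w‖²`. The squared norms are
`1 + a²` and `(1 + a²)((1 + a²)² + d²)`, which gives the two terms of the formula.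
-/

open Submodule Metric Set RealInnerProductSpace

section

variable {𝕜 E : Type*} [RCLike 𝕜] [NormedAddCommGroup E] [InnerProductSpace 𝕜 E]

theorem Submodule.mem_orthogonal_span_range_iff {ι : Type*} (w : ι → E) (z : E) :
    z ∈ (span 𝕜 (range w))ᗮ ↔ ∀ i, inner 𝕜 (w i) z = 0 := by
  refine ⟨fun hz i => inner_right_of_mem_orthogonal (subset_span (mem_range_self i)) hz,
    fun h => (mem_orthogonal _ z).2 fun u hu => ?_⟩
  induction hu using span_induction with
  | mem _ hx => obtain ⟨i, rfl⟩ := hx; exact h i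
  | zero => exact inner_zero_left z
  | add x y _ _ hx hy => rw [inner_add_left, hx, hy, add_zero]
  | smul c x _ hx => rw [inner_smul_left, hx, mul_zero]

theorem Metric.infDist_submodule_eq_norm_sub (K : Submodule 𝕜 E) {p m : E} (hm : m ∈ K)
    (h : ∀ z ∈ K, inner 𝕜 z (p - m) = 0) : infDist p (K : Set E) = ‖p - m‖ := by
  refine le_antisymm ((infDist_le_dist_of_mem hm).trans_eq (dist_eq_norm p m)) ?_
  refine (le_infDist ⟨m, hm⟩).2 fun z hz => ?_
  have hpyth := norm_add_sq_eq_norm_sq_add_norm_sq_of_inner_eq_zero _ _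
    (h (m - z) (K.sub_mem hm hz))
  rw [dist_eq_norm, ← sub_add_sub_cancel p m z, ← pow_le_pow_iff_left₀ (norm_nonneg _)
    (norm_nonneg _) two_ne_zero, add_comm, sq, sq, hpyth]
  exact le_add_of_nonneg_left (mul_self_nonneg _)

end

theorem Metric.infDist_orthogonal_span_range_sq {E : Type*} [NormedAddCommGroup E]
    [InnerProductSpace ℝ E] {ι : Type*} [Fintype ι] {w : ι → E}
    (hw : Pairwise fun i j => ⟪w i, w j⟫ = 0) (p : E) :
    infDist p ((span ℝ (range w))ᗮ : Set E) ^ 2 = ∑ i, ⟪w i, p⟫ ^ 2 / ‖w i‖ ^ 2 := by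
  set c : ι → ℝ := fun i => ⟪w i, p⟫ / ‖w i‖ ^ 2
  set r : E := ∑ i, c i • w i
  have hcoef : ∀ j, ⟪w j, r⟫ = ⟪w j, p⟫ := by
    intro j
    rw [inner_sum, Finset.sum_eq_single j (fun i _ hij => by rw [real_inner_smul_right,
      hw hij.symm, mul_zero]) (by simp), real_inner_smul_right, real_inner_self_eq_norm_sq]
    rcases eq_or_ne (w j) 0 with h | h
    · simp [h]
    · exact div_mul_cancel₀ _ (pow_ne_zero 2 (norm_ne_zero_iff.2 h))
  have hmem : p - r ∈ (span ℝ (range w))ᗮ :=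
    (mem_orthogonal_span_range_iff w _).2 fun j => by rw [inner_sub_right, hcoef, sub_self]
  have hperp : ∀ z ∈ (span ℝ (range w))ᗮ, ⟪z, p - (p - r)⟫ = 0 := fun z hz => by
    rw [sub_sub_cancel, inner_sum]
    exact Finset.sum_eq_zero fun i _ => by
      rw [real_inner_smul_right, inner_left_of_mem_orthogonal (subset_span (mem_range_self i)) hz,
        mul_zero]
  rw [infDist_submodule_eq_norm_sub _ hmem hperp, sub_sub_cancel, ← real_inner_self_eq_norm_sq]
  calc ⟪r, r⟫ = ∑ i, c i * ⟪w i, r⟫ := by simp only [r, sum_inner, real_inner_smul_left]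
    _ = ∑ i, ⟪w i, p⟫ ^ 2 / ‖w i‖ ^ 2 := by simp only [hcoef, c]; congr 1; ext; ring

theorem EuclideanSpace.inner_fin_four (z w : EuclideanSpace ℝ (Fin 4)) :
    ⟪z, w⟫ = z 0 * w 0 + z 1 * w 1 + z 2 * w 2 + z 3 * w 3 := by
  simp only [PiLp.inner_apply, Fin.sum_univ_four, RCLike.inner_apply, conj_trivial]
  ring

theorem mem_span_jordan_iff (a d : ℝ) (z : EuclideanSpace ℝ (Fin 4)) :
    z ∈ span ℝ {(WithLp.equiv 2 (Fin 4 → ℝ)).symm ![a, 1, 0, 0],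
      (WithLp.equiv 2 (Fin 4 → ℝ)).symm ![d, 0, a, 1]} ↔ z 0 = a * z 1 + d * z 3 ∧ z 2 = a * z 3 := by
  rw [mem_span_pair]
  constructor
  · rintro ⟨α, β, rfl⟩
    simp only [WithLp.equiv_symm_apply, PiLp.add_apply, PiLp.smul_apply, smul_eq_mul, Matrix.cons_val]
    constructor <;> ring
  · rintro ⟨h0, h2⟩
    refine ⟨z 1, z 3, ?_⟩
    ext i
    fin_cases i <;> simp only [WithLp.equiv_symm_apply, PiLp.add_apply, PiLp.smul_apply,
      smul_eq_mul, Matrix.cons_val, Fin.reduceFinMk, Fin.isValue, h0, h2] <;> ring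

/-- The second vector is `1 + a²` times `(1, -a, -ad/(1 + a²), -d/(1 + a²))`, which clears the
denominators without changing `⟪w, p⟫² / ‖w‖²`. -/
def jordanPlaneNormal (a d : ℝ) : Fin 2 → EuclideanSpace ℝ (Fin 4) :=
  ![!₂[0, 0, 1, -a], !₂[1 + a ^ 2, -a * (1 + a ^ 2), -d * a, -d]]

theorem span_jordan_eq_orthogonal (a d : ℝ) :
    span ℝ {(WithLp.equiv 2 (Fin 4 → ℝ)).symm ![a, 1, 0, 0],
      (WithLp.equiv 2 (Fin 4 → ℝ)).symm ![d, 0, a, 1]} =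
      (span ℝ (range (jordanPlaneNormal a d)))ᗮ := by
  have ha : 1 + a ^ 2 ≠ 0 := by positivity
  ext z
  rw [mem_span_jordan_iff, mem_orthogonal_span_range_iff, Fin.forall_fin_two]
  simp only [jordanPlaneNormal, EuclideanSpace.inner_fin_four, Matrix.cons_val]
  constructor
  · rintro ⟨h0, h2⟩
    exact ⟨by linear_combination h2, by linear_combination (1 + a ^ 2) * h0 - a * d * h2⟩
  · rintro ⟨h2, h0⟩
    exact ⟨mul_left_cancel₀ ha (by linear_combination h0 + d * a * h2), by linear_combination h2⟩

theorem jordanPlaneNormal_pairwise_inner_eq_zero (a d : ℝ) :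
    Pairwise fun i j => ⟪jordanPlaneNormal a d i, jordanPlaneNormal a d j⟫ = 0 := by
  have h : ⟪jordanPlaneNormal a d 0, jordanPlaneNormal a d 1⟫ = 0 := by
    simp only [jordanPlaneNormal, EuclideanSpace.inner_fin_four, Matrix.cons_val]
    ring
  intro i j hij
  fin_cases i <;> fin_cases j <;> simp_all [real_inner_comm]

theorem stmt_16 (a d x y u v : ℝ)
    (M : Submodule ℝ (EuclideanSpace ℝ (Fin 4)))
    (hM : M = Submodule.span ℝ
      {(WithLp.equiv 2 (Fin 4 → ℝ)).symm ![a, 1, 0, 0],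
       (WithLp.equiv 2 (Fin 4 → ℝ)).symm ![d, 0, a, 1]}) :
    Metric.infDist ((WithLp.equiv 2 (Fin 4 → ℝ)).symm ![x, y, u, v]) (M : Set (EuclideanSpace ℝ (Fin 4))) ^ 2 =
      (u - a * v) ^ 2 / (1 + a ^ 2) +
        ((1 + a ^ 2) * (x - a * y) - d * a * u - d * v) ^ 2 /
          ((1 + a ^ 2) * ((1 + a ^ 2) ^ 2 + d ^ 2)) := by
  rw [hM, span_jordan_eq_orthogonal,
    infDist_orthogonal_span_range_sq (jordanPlaneNormal_pairwise_inner_eq_zero a d),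
    Fin.sum_univ_two, ← real_inner_self_eq_norm_sq, ← real_inner_self_eq_norm_sq]
  simp only [jordanPlaneNormal, WithLp.equiv_symm_apply, EuclideanSpace.inner_fin_four,
    Matrix.cons_val]
  congr 1 <;> congr 1 <;> ring
end

section
/- Let V = y² + v², Z = x² + u², ω = V + Z, Δ = xv - yu, and let Q(x, y, u, v) = (1/2)(x² + y² + u² + v²)·[(5VZ + ω²)(2VZ + ω²) - 12Δ²(ω² - VZ)]. Then Q(x, y, u, v) ≥ (63/176)(x² + y² + u² + v²)⁵ for all real x, y, u, v. -/
/-!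
By Lagrange's identity `Δ² + p² = V Z` with `p = x y + u v`. Eliminating `Δ²` turns the bracket
into `63/88 ω⁴ + 22 (V Z - 5/44 ω²)² + 12 p² (V² + V Z + Z²)`, a sum of squares above
`63/88 ω⁴`; multiplying by `ω / 2` with `ω = x² + y² + u² + v²` gives the bound.
-/

theorem levi_bracket_eq (V Z Δ p : ℝ) (hΔp : Δ ^ 2 + p ^ 2 = V * Z) :
    (5 * V * Z + (V + Z) ^ 2) * (2 * V * Z + (V + Z) ^ 2) - 12 * Δ ^ 2 * ((V + Z) ^ 2 - V * Z) =
      63 / 88 * (V + Z) ^ 4 + 22 * (V * Z - 5 / 44 * (V + Z) ^ 2) ^ 2 +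
        12 * p ^ 2 * (V ^ 2 + V * Z + Z ^ 2) := by
  rw [show Δ ^ 2 = V * Z - p ^ 2 by linarith]
  ring

theorem levi_bracket_ge (V Z Δ p : ℝ) (hΔp : Δ ^ 2 + p ^ 2 = V * Z) :
    63 / 88 * (V + Z) ^ 4 ≤
      (5 * V * Z + (V + Z) ^ 2) * (2 * V * Z + (V + Z) ^ 2) - 12 * Δ ^ 2 * ((V + Z) ^ 2 - V * Z) := by
  have hquad : 0 ≤ V ^ 2 + V * Z + Z ^ 2 := by nlinarith [sq_nonneg (V + Z), sq_nonneg V, sq_nonneg Z]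
  rw [levi_bracket_eq V Z Δ p hΔp]
  nlinarith [sq_nonneg (V * Z - 5 / 44 * (V + Z) ^ 2), mul_nonneg (sq_nonneg p) hquad]

theorem stmt_19 (x y u v V Z ω Δ Q : ℝ)
    (hV : V = y ^ 2 + v ^ 2) (hZ : Z = x ^ 2 + u ^ 2)
    (hω : ω = V + Z) (hΔ : Δ = x * v - y * u)
    (hQ : Q = 1 / 2 * (x ^ 2 + y ^ 2 + u ^ 2 + v ^ 2) *
      ((5 * V * Z + ω ^ 2) * (2 * V * Z + ω ^ 2) - 12 * Δ ^ 2 * (ω ^ 2 - V * Z))) :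
    Q ≥ 63 / 176 * (x ^ 2 + y ^ 2 + u ^ 2 + v ^ 2) ^ 5 := by
  have hnorm : x ^ 2 + y ^ 2 + u ^ 2 + v ^ 2 = ω := by rw [hω, hV, hZ]; ring
  have hlagrange : Δ ^ 2 + (x * y + u * v) ^ 2 = V * Z := by rw [hΔ, hV, hZ]; ring
  have hbracket := levi_bracket_ge V Z Δ _ hlagrange
  rw [← hω] at hbracket
  have hω_nonneg : 0 ≤ ω := hnorm ▸ by positivity
  rw [hQ, hnorm]
  linarith [mul_le_mul_of_nonneg_left hbracket hω_nonneg]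
end
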